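/- arXiv:0806.1268 — 3 statements merged into one kernel-verified Lean document; each statement's English description precedes it below -/
import Mathlib

section
/- Let ω ≠ 1 be a complex number, t a nonzero complex number, τ an integer, and z_n, z_{n_B+1}, ..., z_{n_B+n_A} pairwise distinct nonzero complex numbers with t·z_n·ω^{τ+1} ≠ 1. Then ∏_{p=1}^{n_A} (z_{n_B+p} − z_n ω)/(z_{n_B+p} − z_n) − (t z_n ω^{τ+n_A+1} − 1)/(t z_n ω^{τ+1} − 1) + Σ_{p=1}^{n_A} [(t z_{n_B+p} ω^{τ+1} − 1)/(t z_n ω^{τ+1} − 1)] · [z_n(1−ω)/(z_n − z_{n_B+p})] · ∏_{r=1, r≠p}^{n_A} (z_{n_B+r} − z_{n_B+p} ω)/(z_{n_B+r} − z_{n_B+p}) = 0. -/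
open Finset

open Polynomial in
/-- Auxiliary: sum of values times nodal weights equals top coefficient. -/
lemma aux_sum_nodalWeight {n : ℕ} (v : Fin (n + 1) → ℂ) (hv : Function.Injective v)
    (f : ℂ[X]) (hf : f.degree < ((n + 1 : ℕ) : WithBot ℕ)) :
    ∑ j, f.eval (v j) * Lagrange.nodalWeight univ v j = f.coeff n := by
  have hinj : Set.InjOn v (univ : Finset (Fin (n + 1))) := hv.injOn
  have hdeg : f.degree < (#(univ : Finset (Fin (n + 1))) : WithBot ℕ) := by
    simpa using hf
  have hrep := Lagrange.eq_interpolate hinj hdeg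
  conv_rhs => rw [hrep]
  rw [Lagrange.interpolate_apply, Polynomial.finset_sum_coeff]
  refine Finset.sum_congr rfl fun j _ => ?_
  have hb : (Lagrange.basis univ v j).coeff n = Lagrange.nodalWeight univ v j := by
    rw [Lagrange.basis_eq_prod_sub_inv_mul_nodal_div (mem_univ j),
      ← Lagrange.nodal_erase_eq_nodal_div (mem_univ j), Polynomial.coeff_C_mul]
    have hm : (Lagrange.nodal (univ.erase j) v).Monic := Lagrange.nodal_monic
    have hd : (Lagrange.nodal (univ.erase j) v).natDegree = n := by
      rw [Lagrange.natDegree_nodal, card_erase_of_mem (mem_univ j)]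
      simp
    have h1 : (Lagrange.nodal (univ.erase j) v).coeff n = 1 := by
      have h2 := hm.coeff_natDegree
      rwa [hd] at h2
    rw [h1, mul_one]
  rw [Polynomial.coeff_C_mul, hb]

/-- Auxiliary: product of negations. -/
lemma aux_prod_neg {α : Type*} (s : Finset α) (g : α → ℂ) :
    ∏ i ∈ s, (-(g i)) = (-1) ^ (#s) * ∏ i ∈ s, g i := by
  rw [← prod_const, ← prod_mul_distrib]
  exact prod_congr rfl fun i _ => by ring

lemma aux_prod_erase_zero {M : Type*} [CommMonoid M] {n : ℕ} (g : Fin (n + 1) → M) :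
    ∏ k ∈ (univ : Finset (Fin (n + 1))).erase 0, g k = ∏ r : Fin n, g r.succ := by
  rw [Fin.univ_succ, Finset.erase_cons, Finset.prod_map]
  rfl

lemma aux_prod_erase_succ {M : Type*} [CommMonoid M] {n : ℕ} (g : Fin (n + 1) → M) (p : Fin n) :
    ∏ k ∈ (univ : Finset (Fin (n + 1))).erase p.succ, g k
      = g 0 * ∏ r ∈ (univ : Finset (Fin n)).erase p, g r.succ := by
  rw [Fin.univ_succ, Finset.erase_cons_of_ne _ (Fin.succ_ne_zero p).symm, Finset.prod_cons]
  congr 1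
  rw [show (p.succ : Fin (n + 1)) = (⟨Fin.succ, Fin.succ_injective n⟩ : Fin n ↪ Fin (n + 1)) p
      from rfl, ← Finset.map_erase, Finset.prod_map]
  rfl

/-- the explicit rational identity of Lemma B.3 (key identity 1). -/
theorem stmt_1 (ω : ℂ) (hω1 : ω ≠ 1) (hω0 : ω ≠ 0) (t : ℂ) (ht : t ≠ 0) (τ : ℤ)
    (nA : ℕ) (zn : ℂ) (w : Fin nA → ℂ)
    (hzn : zn ≠ 0) (hw0 : ∀ p, w p ≠ 0)
    (hwinj : Function.Injective w) (hwzn : ∀ p, w p ≠ zn)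
    (hden : t * zn * ω ^ (τ + 1) ≠ 1) :
    (∏ p, (w p - zn * ω) / (w p - zn))
      - (t * zn * ω ^ (τ + (nA : ℤ) + 1) - 1) / (t * zn * ω ^ (τ + 1) - 1)
      + ∑ p, ((t * w p * ω ^ (τ + 1) - 1) / (t * zn * ω ^ (τ + 1) - 1))
          * (zn * (1 - ω) / (zn - w p))
          * ∏ r ∈ univ \ {p}, (w r - w p * ω) / (w r - w p) = 0 := by
  classical
  set Ω : ℂ := ω ^ (τ + 1) with hΩ
  -- the nodes
  set v : Fin (nA + 1) → ℂ := Fin.cons zn w with hvdef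
  have hv0 : v 0 = zn := rfl
  have hvs : ∀ p : Fin nA, v p.succ = w p := fun p => by simp [hvdef]
  have hvinj : Function.Injective v := by
    intro a b hab
    induction a using Fin.cases with
    | zero =>
      induction b using Fin.cases with
      | zero => rfl
      | succ q => exact absurd hab.symm (by rw [hv0, hvs]; exact hwzn q)
    | succ q =>
      induction b using Fin.cases with
      | zero => exact absurd hab (by rw [hv0, hvs]; exact hwzn q)
      | succ q' => rw [hvs, hvs] at hab; rw [hwinj hab]
  -- the polynomial
  set f : Polynomial ℂ := ∏ p : Fin nA, (Polynomial.C (-ω) * Polynomial.X + Polynomial.C (w p))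
    with hfdef
  have hωn : (-ω : ℂ) ≠ 0 := neg_ne_zero.mpr hω0
  have heval : ∀ x : ℂ, f.eval x = ∏ p, (w p - x * ω) := by
    intro x
    rw [hfdef, Polynomial.eval_prod]
    exact prod_congr rfl fun p _ => by
      simp only [Polynomial.eval_add, Polynomial.eval_mul, Polynomial.eval_C, Polynomial.eval_X]
      ring
  have hfne : ∀ p : Fin nA, (Polynomial.C (-ω) * Polynomial.X + Polynomial.C (w p)) ≠ 0 := by
    intro p h
    have h2 := congrArg Polynomial.leadingCoeff h
    rw [Polynomial.leadingCoeff_linear hωn, Polynomial.leadingCoeff_zero] at h2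
    exact hωn h2
  have hfdeg : f.natDegree = nA := by
    rw [hfdef, Polynomial.natDegree_prod _ _ (fun p _ => hfne p),
      Finset.sum_congr rfl (fun p _ => Polynomial.natDegree_linear hωn), Finset.sum_const]
    simp
  have hcoeff : f.coeff nA = (-ω) ^ nA := by
    rw [← hfdeg, Polynomial.coeff_natDegree, hfdef, Polynomial.leadingCoeff_prod,
      Finset.prod_congr rfl (fun p _ => Polynomial.leadingCoeff_linear hωn (b := w p)),
      Finset.prod_const, hfdeg]
    simp
  have hfdeglt : f.degree < ((nA + 1 : ℕ) : WithBot ℕ) :=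
    lt_of_le_of_lt Polynomial.degree_le_natDegree (by rw [hfdeg]; exact_mod_cast Nat.lt_succ_self nA)
  -- notation for weights
  set W : Fin (nA + 1) → ℂ := Lagrange.nodalWeight univ v with hWdef
  -- sum identity 1 (leading coefficient)
  have hS1 : ∑ j, f.eval (v j) * W j = (-ω) ^ nA := by
    rw [hWdef, aux_sum_nodalWeight v hvinj f hfdeglt, hcoeff]
  -- sum identity 2 (evaluation at 0)
  have hPw : (∏ p, w p) ≠ 0 := prod_ne_zero_iff.mpr fun p _ => hw0 p
  have hznS2 : zn * (∑ j, (v j)⁻¹ * f.eval (v j) * W j) = (-1) ^ nA := by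
    have h0 : ∀ i ∈ (univ : Finset (Fin (nA + 1))), (0 : ℂ) ≠ v i := by
      intro i _
      induction i using Fin.cases with
      | zero => rw [hv0]; exact fun h => hzn h.symm
      | succ q => rw [hvs]; exact fun h => hw0 q h.symm
    have hB := Lagrange.eval_interpolate_not_at_node (s := univ) (v := v) (x := 0)
      (fun i => f.eval (v i)) h0
    rw [← Lagrange.eq_interpolate hvinj.injOn (by simpa using hfdeglt)] at hB
    have hev0 : f.eval 0 = ∏ p, w p := by rw [heval 0]; simp
    have hnodal : Polynomial.eval (0 : ℂ) (Lagrange.nodal univ v)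
        = (-1) ^ (nA + 1) * (zn * ∏ p, w p) := by
      rw [Lagrange.eval_nodal]
      calc ∏ i, ((0 : ℂ) - v i) = ∏ i, (-(v i)) := by simp
        _ = (-1) ^ (#(univ : Finset (Fin (nA + 1)))) * ∏ i, v i := aux_prod_neg _ _
        _ = (-1) ^ (nA + 1) * (zn * ∏ p, w p) := by
            rw [Fin.prod_univ_succ, hv0]
            simp [hvs]
    have hsum : (∑ i, W i * ((0 : ℂ) - v i)⁻¹ * f.eval (v i))
        = -∑ j, (v j)⁻¹ * f.eval (v j) * W j := by
      rw [← Finset.sum_neg_distrib]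
      exact sum_congr rfl fun j _ => by rw [zero_sub, inv_neg]; ring
    rw [hev0, hnodal, hsum] at hB
    -- hB : ∏ w = (-1)^(nA+1) * (zn * ∏ w) * (-S2)
    have h11 : ((-1 : ℂ)) ^ nA * (-1) ^ nA = 1 := by rw [← mul_pow]; norm_num
    have hAx : (-1 : ℂ) ^ nA * (zn * ∑ j, (v j)⁻¹ * f.eval (v j) * W j) = 1 := by
      refine mul_right_cancel₀ hPw ?_
      rw [one_mul]
      linear_combination (-1 : ℂ) * hB
    calc zn * (∑ j, (v j)⁻¹ * f.eval (v j) * W j)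
        = ((-1 : ℂ) ^ nA * (-1) ^ nA) * (zn * ∑ j, (v j)⁻¹ * f.eval (v j) * W j) := by
          rw [h11, one_mul]
      _ = (-1) ^ nA * ((-1) ^ nA * (zn * ∑ j, (v j)⁻¹ * f.eval (v j) * W j)) := by ring
      _ = (-1) ^ nA := by rw [hAx, mul_one]
  -- the combined sum
  have key' : zn * (∑ j, (t * Ω - (v j)⁻¹) * f.eval (v j) * W j)
      = (-1) ^ nA * (t * zn * Ω * ω ^ nA - 1) := by
    have hE : (∑ j, (t * Ω - (v j)⁻¹) * f.eval (v j) * W j)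
        = t * Ω * ((-ω) ^ nA) - ∑ j, (v j)⁻¹ * f.eval (v j) * W j := by
      rw [← hS1, Finset.mul_sum, ← Finset.sum_sub_distrib]
      exact sum_congr rfl fun j _ => by ring
    rw [hE, mul_sub, hznS2, neg_pow]
    ring
  -- expand the sum over nodes
  have t0 : zn * ((t * Ω - (v 0)⁻¹) * f.eval (v 0) * W 0)
      = (-1) ^ nA * ((t * zn * Ω - 1) * ∏ p, (w p - zn * ω) / (w p - zn)) := by
    have hW0 : W 0 = (-1) ^ nA * ∏ p, (w p - zn)⁻¹ := by
      rw [hWdef, Lagrange.nodalWeight, aux_prod_erase_zero (fun k => (v 0 - v k)⁻¹)]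
      calc ∏ r : Fin nA, (v 0 - v r.succ)⁻¹ = ∏ r, (-((w r - zn)⁻¹)) := by
            refine prod_congr rfl fun r _ => ?_
            rw [hv0, hvs, ← neg_sub (w r) zn, inv_neg]
        _ = (-1) ^ nA * ∏ p, (w p - zn)⁻¹ := by
            rw [aux_prod_neg]; simp
    have hratio : (∏ p, (w p - zn * ω) / (w p - zn))
        = (∏ p, (w p - zn * ω)) * ∏ p, (w p - zn)⁻¹ := by
      rw [← prod_mul_distrib]
      exact prod_congr rfl fun p _ => div_eq_mul_inv _ _
    rw [hW0, hv0, heval, hratio]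
    have hz1 : zn * zn⁻¹ = 1 := mul_inv_cancel₀ hzn
    linear_combination (-1 : ℂ) * (-1 : ℂ) ^ nA * (∏ p, (w p - zn * ω))
      * (∏ p, (w p - zn)⁻¹) * hz1
  have tp : ∀ p : Fin nA, zn * ((t * Ω - (v p.succ)⁻¹) * f.eval (v p.succ) * W p.succ)
      = (-1) ^ nA * (((t * w p * Ω - 1))
          * (zn * (1 - ω) / (zn - w p))
          * ∏ r ∈ univ \ {p}, (w r - w p * ω) / (w r - w p)) := by
    intro p
    have hpos : 0 < nA := p.pos
    have hW : W p.succ = (w p - zn)⁻¹ * ∏ r ∈ univ.erase p, (w p - w r)⁻¹ := by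
      rw [hWdef, Lagrange.nodalWeight, aux_prod_erase_succ (fun k => (v p.succ - v k)⁻¹) p]
      simp only [hv0, hvs]
    have hsign : (∏ r ∈ univ.erase p, (w p - w r)⁻¹)
        = (-1) ^ (nA - 1) * ∏ r ∈ univ.erase p, (w r - w p)⁻¹ := by
      calc ∏ r ∈ univ.erase p, (w p - w r)⁻¹ = ∏ r ∈ univ.erase p, (-((w r - w p)⁻¹)) := by
            refine prod_congr rfl fun r _ => ?_
            rw [← neg_sub (w r) (w p), inv_neg]
        _ = (-1) ^ (nA - 1) * ∏ r ∈ univ.erase p, (w r - w p)⁻¹ := by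
            rw [aux_prod_neg, card_erase_of_mem (mem_univ p)]
            simp
    have hfe : f.eval (w p) = (w p - w p * ω) * ∏ r ∈ univ.erase p, (w r - w p * ω) := by
      rw [heval, ← Finset.mul_prod_erase univ _ (mem_univ p)]
    have hratio : (∏ r ∈ univ \ {p}, (w r - w p * ω) / (w r - w p))
        = (∏ r ∈ univ.erase p, (w r - w p * ω)) * ∏ r ∈ univ.erase p, (w r - w p)⁻¹ := by
      rw [sdiff_singleton_eq_erase, ← prod_mul_distrib]
      exact prod_congr rfl fun r _ => div_eq_mul_inv _ _
    have hA2 : ((-1 : ℂ)) ^ nA = (-1) ^ (nA - 1) * (-1) := by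
      conv_lhs => rw [← Nat.succ_pred_eq_of_pos hpos]
      rw [pow_succ]
      rfl
    have hwp1 : w p * (w p)⁻¹ = 1 := mul_inv_cancel₀ (hw0 p)
    rw [hW, hsign, hvs, hfe, hratio, hA2, div_eq_mul_inv (zn * (1 - ω)) (zn - w p),
      show (w p - zn)⁻¹ = -((zn - w p)⁻¹) by rw [← neg_sub zn (w p), inv_neg]]
    linear_combination (-(1 : ℂ)) ^ (nA - 1) * zn * (1 - ω) * (zn - w p)⁻¹
      * (∏ r ∈ univ.erase p, (w r - w p * ω)) * (∏ r ∈ univ.erase p, (w r - w p)⁻¹) * hwp1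
  -- combine
  have hA0 : ((-1 : ℂ)) ^ nA ≠ 0 := pow_ne_zero _ (by norm_num)
  have key : (t * zn * Ω - 1) * (∏ p, (w p - zn * ω) / (w p - zn))
      + ∑ p, ((t * w p * Ω - 1)) * (zn * (1 - ω) / (zn - w p))
          * ∏ r ∈ univ \ {p}, (w r - w p * ω) / (w r - w p)
      = t * zn * Ω * ω ^ nA - 1 := by
    refine mul_left_cancel₀ hA0 ?_
    rw [← key', Fin.sum_univ_succ, mul_add, mul_add, Finset.mul_sum, Finset.mul_sum, t0]
    congr 1
    refine sum_congr rfl fun p _ => ?_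
    rw [tp p]
  -- finish
  have hQ : t * zn * ω ^ (τ + (nA : ℤ) + 1) = t * zn * Ω * ω ^ nA := by
    rw [hΩ, show τ + (nA : ℤ) + 1 = (τ + 1) + (nA : ℤ) by ring, zpow_add₀ hω0, zpow_natCast]
    ring
  have hD : t * zn * Ω - 1 ≠ 0 := sub_ne_zero.mpr hden
  have hDinv : (t * zn * Ω - 1) * (t * zn * Ω - 1)⁻¹ = 1 := mul_inv_cancel₀ hD
  have hsum2 : ∑ p, ((t * w p * Ω - 1) / (t * zn * Ω - 1)) * (zn * (1 - ω) / (zn - w p))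
          * ∏ r ∈ univ \ {p}, (w r - w p * ω) / (w r - w p)
      = (t * zn * Ω - 1)⁻¹ * ∑ p, ((t * w p * Ω - 1)) * (zn * (1 - ω) / (zn - w p))
          * ∏ r ∈ univ \ {p}, (w r - w p * ω) / (w r - w p) := by
    rw [Finset.mul_sum]
    exact sum_congr rfl fun p _ => by rw [div_eq_mul_inv]; ring
  rw [hQ, hsum2]
  linear_combination (t * zn * Ω - 1)⁻¹ * key
    - (∏ p, (w p - zn * ω) / (w p - zn)) * hDinv
end

section
/- Let ω ≠ 1 be a complex number, t nonzero, τ an integer, and z_1, ..., z_n pairwise distinct nonzero complex numbers. Fix a subset I ⊂ {1,…,n} of size n_B with 0 ≤ n_B < n. Then the sum over all ordered pairs of disjoint sequences {j_1,…,j_{n_A}}, {k_1,…,k_{n_D}} partitioning {1,…,n}∖I (with n_A + n_D = n − n_B) of (−1)^{n_D} · ∏_{p=1}^{n_A} 1/(t z_{j_p} ω^{τ+n_D+1} − 1) · ∏_{q=1}^{n_D} ω^{q−1}/(t z_{k_q} ω^{τ+n_D} − 1) · ∏_{p=1}^{n_A} ∏_{q=1}^{n_D} (z_{k_q} − z_{j_p}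 ω)/(z_{k_q} − z_{j_p}) equals 0. -/
/-!
Write `u = t ω^τ`, `x = u⁻¹`, `s` for the complement of `I` and `d = |s \ J|`. Since
`1 / (u y - 1) = -x (x - y)⁻¹`, the summand indexed by `J` is `(-x)^|s|` times
`coeff s z ω J * ∏_{i ∈ s} (x - pole s z ω J i)⁻¹`, with poles
`pole s z ω J i = z_i ω^(d + [i ∈ J])`. The Lagrange barycentric formula expands this product in
partial fractions, with residue `coeff s z ω J * nodalWeight s (pole s z ω J) i` at the pole
indexed by `i`. For `i ∈ J`, the pole of `J` and the pole of `J \ {i}` indexed by `i` coincide and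
their residues cancel; pairing `(J, i)` with `(J \ {i}, i)` exhausts all terms, so the sum vanishes.

Partial fractions need the poles of each `J` to be distinct, which fails when `z_k = z_j ω`.
Replacing `z` by `z + ε` restores this for all small `ε ≠ 0`, and the sum is continuous in `ε`.
-/

open Finset Filter Topology Lagrange

theorem Lagrange.prod_inv_sub_eq_sum_nodalWeight_mul {F ι : Type*} [Field F] [DecidableEq ι]
    {s : Finset ι} {v : ι → F} {x : F} (hvs : Set.InjOn v s) (hs : s.Nonempty)
    (hx : ∀ i ∈ s, x ≠ v i) :
    ∏ i ∈ s, (x - v i)⁻¹ = ∑ i ∈ s, nodalWeight s v i * (x - v i)⁻¹ := by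
  have h := eval_interpolate_not_at_node (1 : ι → F) hx
  simp only [interpolate_one hvs hs, Polynomial.eval_one, eval_nodal, Pi.one_apply,
    mul_one] at h
  rw [prod_inv_distrib]
  exact inv_eq_of_mul_eq_one_right h.symm

theorem Finset.sum_powerset_sum_eq_sum_sum_add_erase {ι M : Type*} [DecidableEq ι]
    [AddCommMonoid M] (s : Finset ι) (f : Finset ι → ι → M) :
    ∑ J ∈ s.powerset, ∑ i ∈ s, f J i
      = ∑ J ∈ s.powerset, ∑ i ∈ J, (f J i + f (J.erase i) i) := by
  have hout : ∑ J ∈ s.powerset, ∑ i ∈ s \ J, f J i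
      = ∑ J ∈ s.powerset, ∑ i ∈ J, f (J.erase i) i := by
    simp only [sum_sigma']
    refine sum_nbij' (fun p => ⟨insert p.2 p.1, p.2⟩) (fun p => ⟨p.1.erase p.2, p.2⟩)
      ?_ ?_ ?_ ?_ ?_ <;> rintro ⟨J, i⟩ hp <;>
      simp only [mem_sigma, mem_powerset, mem_sdiff] at hp ⊢
    · exact ⟨insert_subset hp.2.1 hp.1, mem_insert_self i J⟩
    · exact ⟨(erase_subset i J).trans hp.1, hp.1 hp.2, notMem_erase i J⟩
    · rw [erase_insert hp.2.2]
    · rw [insert_erase hp.2]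
    · rw [erase_insert hp.2.2]
  simp only [sum_add_distrib, ← hout]
  rw [← sum_add_distrib]
  exact sum_congr rfl fun J hJ => by rw [add_comm, sum_sdiff (mem_powerset.1 hJ)]

theorem div_mul_inv_sub_mul_pow_succ {F : Type*} [Field F] {a b ω : F} (hω : ω ≠ 0)
    (habω : a ≠ b * ω) (m : ℕ) :
    (a - b * ω) / (a - b) * (a * ω ^ m - b * ω ^ (m + 1))⁻¹ = (a * ω ^ m - b * ω ^ m)⁻¹ := by
  have habω' : a - b * ω ≠ 0 := sub_ne_zero.2 habω
  rw [show a * ω ^ m - b * ω ^ (m + 1) = ω ^ m * (a - b * ω) by ring,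
    show a * ω ^ m - b * ω ^ m = ω ^ m * (a - b) by ring]
  field_simp

theorem div_mul_inv_mul_pow_succ_sub {F : Type*} [Field F] {a c ω : F} (hω : ω ≠ 0)
    (hcaω : c ≠ a * ω) (m : ℕ) :
    (c - a * ω) / (c - a) * (a * ω ^ (m + 1) - c * ω ^ m)⁻¹
      = ω * (a * ω ^ (m + 1) - c * ω ^ (m + 1))⁻¹ := by
  have hcaω' : c - a * ω ≠ 0 := sub_ne_zero.2 hcaω
  rw [show a * ω ^ (m + 1) - c * ω ^ m = -(ω ^ m * (c - a * ω)) by ring,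
    show a * ω ^ (m + 1) - c * ω ^ (m + 1) = -(ω ^ m * (c - a) * ω) by ring]
  field_simp

theorem one_div_mul_sub_one {F : Type*} [Field F] {u : F} (hu : u ≠ 0) (y : F) :
    1 / (u * y - 1) = -u⁻¹ * (u⁻¹ - y)⁻¹ := by
  rw [show u * y - 1 = -u * (u⁻¹ - y) by field_simp; ring, one_div, mul_inv, inv_neg]

theorem mul_zpow_add_natCast {F : Type*} [Field F] {ω : F} (hω : ω ≠ 0) (t y : F) (τ : ℤ)
    (m : ℕ) :
    t * y * ω ^ (τ + (m : ℤ)) = t * ω ^ τ * (y * ω ^ m) := by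
  rw [zpow_add₀ hω, zpow_natCast]
  ring

theorem eventually_add_ne_add_mul {𝕜 : Type*} [NontriviallyNormedField 𝕜] {ω : 𝕜} (hω : ω ≠ 1)
    (a b : 𝕜) : ∀ᶠ ε in 𝓝[≠] (0 : 𝕜), a + ε ≠ (b + ε) * ω := by
  have hω' : 1 - ω ≠ 0 := sub_ne_zero.2 (Ne.symm hω)
  have hne : ∀ᶠ ε in 𝓝[≠] (0 : 𝕜), ε ≠ (ω * b - a) / (1 - ω) := by
    rcases eq_or_ne 0 ((ω * b - a) / (1 - ω)) with h | h
    · exact h ▸ self_mem_nhdsWithin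
    · exact eventually_ne_nhdsWithin h
  refine hne.mono fun ε hε h => hε ?_
  rw [eq_div_iff hω']
  linear_combination h

namespace KeyIdentity

section

variable {F ι : Type*} [Field F] [DecidableEq ι] (s : Finset ι) (z : ι → F) (ω : F)

def pole (J : Finset ι) (i : ι) : F :=
  z i * ω ^ ((s \ J).card + if i ∈ J then 1 else 0)

def coeff (J : Finset ι) : F :=
  (-1) ^ (s \ J).card * ω ^ ((s \ J).card * ((s \ J).card - 1) / 2)
    * ∏ j ∈ J, ∏ k ∈ s \ J, (z k - z j * ω) / (z k - z j)

variable {s z ω}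

theorem pole_of_mem {J : Finset ι} {i : ι} (hi : i ∈ J) :
    pole s z ω J i = z i * ω ^ ((s \ J).card + 1) := by
  simp [pole, hi]

theorem pole_of_notMem {J : Finset ι} {i : ι} (hi : i ∉ J) :
    pole s z ω J i = z i * ω ^ (s \ J).card := by
  simp [pole, hi]

theorem card_sdiff_erase {J : Finset ι} {i : ι} (hJ : J ⊆ s) (hi : i ∈ J) :
    (s \ J.erase i).card = (s \ J).card + 1 := by
  rw [sdiff_erase (hJ hi), card_insert_of_notMem fun h => (mem_sdiff.1 h).2 hi]

theorem pole_erase_self {J : Finset ι} {i : ι} (hJ : J ⊆ s) (hi : i ∈ J) :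
    pole s z ω (J.erase i) i = pole s z ω J i := by
  rw [pole_of_notMem (notMem_erase i J), pole_of_mem hi, card_sdiff_erase hJ hi]

theorem pole_injOn (hω : ω ≠ 0) (hz : Set.InjOn z s)
    (hcross : ∀ i ∈ s, ∀ j ∈ s, i ≠ j → z i ≠ z j * ω) {J : Finset ι} :
    Set.InjOn (pole s z ω J) s := by
  have hcancel : ∀ {a b : F} {m : ℕ}, a * ω ^ m = b * ω ^ m → a = b :=
    fun h => mul_right_cancel₀ (pow_ne_zero _ hω) h
  intro i hi i' hi' h
  by_cases hiJ : i ∈ J <;> by_cases hi'J : i' ∈ J <;>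
    simp only [pole, hiJ, hi'J, if_true, if_false, add_zero] at h
  · exact hz hi hi' (hcancel h)
  · rw [pow_succ', ← mul_assoc] at h
    have h' : z i * ω = z i' := hcancel h
    by_contra hne
    exact hcross i' hi' i hi (Ne.symm hne) h'.symm
  · rw [pow_succ', ← mul_assoc] at h
    have h' : z i = z i' * ω := hcancel h
    by_contra hne
    exact hcross i hi i' hi' hne h'
  · exact hz hi hi' (hcancel h)

theorem nodalWeight_pole {J : Finset ι} {i : ι} (hJ : J ⊆ s) (hi : i ∈ J) (J₀ : Finset ι) :
    nodalWeight s (pole s z ω J₀) i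
      = (∏ j ∈ J.erase i, (pole s z ω J₀ i - pole s z ω J₀ j)⁻¹)
        * ∏ k ∈ s \ J, (pole s z ω J₀ i - pole s z ω J₀ k)⁻¹ := by
  have hsplit : s.erase i = J.erase i ∪ s \ J := by
    ext a; by_cases ha : a = i <;> simp only [mem_erase, mem_union, ha] <;> grind
  rw [nodalWeight, hsplit, prod_union (disjoint_sdiff.mono_left (erase_subset i J))]

theorem nodalWeight_pole_of_mem {J : Finset ι} {i : ι} (hJ : J ⊆ s) (hi : i ∈ J) :
    nodalWeight s (pole s z ω J) i
      = (∏ j ∈ J.erase i, (z i * ω ^ ((s \ J).card + 1) - z j * ω ^ ((s \ J).card + 1))⁻¹)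
        * ∏ k ∈ s \ J, (z i * ω ^ ((s \ J).card + 1) - z k * ω ^ (s \ J).card)⁻¹ := by
  rw [nodalWeight_pole hJ hi, pole_of_mem hi]
  congr 1
  · exact prod_congr rfl fun j hj => by rw [pole_of_mem (mem_of_mem_erase hj)]
  · exact prod_congr rfl fun k hk => by rw [pole_of_notMem (mem_sdiff.1 hk).2]

theorem nodalWeight_pole_erase {J : Finset ι} {i : ι} (hJ : J ⊆ s) (hi : i ∈ J) :
    nodalWeight s (pole s z ω (J.erase i)) i
      = (∏ j ∈ J.erase i,
          (z i * ω ^ ((s \ J).card + 1) - z j * ω ^ ((s \ J).card + 1 + 1))⁻¹)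
        * ∏ k ∈ s \ J, (z i * ω ^ ((s \ J).card + 1) - z k * ω ^ ((s \ J).card + 1))⁻¹ := by
  rw [nodalWeight_pole hJ hi, pole_erase_self hJ hi, pole_of_mem hi]
  congr 1
  · exact prod_congr rfl fun j hj => by rw [pole_of_mem hj, card_sdiff_erase hJ hi]
  · refine prod_congr rfl fun k hk => ?_
    rw [pole_of_notMem fun h => (mem_sdiff.1 hk).2 (mem_of_mem_erase h), card_sdiff_erase hJ hi]

theorem coeff_of_mem {J : Finset ι} {i : ι} (hi : i ∈ J) :
    coeff s z ω J = (-1) ^ (s \ J).card * ω ^ ((s \ J).card * ((s \ J).card - 1) / 2)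
      * (∏ k ∈ s \ J, (z k - z i * ω) / (z k - z i))
      * ∏ j ∈ J.erase i, ∏ k ∈ s \ J, (z k - z j * ω) / (z k - z j) := by
  rw [coeff, ← mul_prod_erase J _ hi]
  ring

theorem coeff_erase {J : Finset ι} {i : ι} (hJ : J ⊆ s) (hi : i ∈ J) :
    coeff s z ω (J.erase i) = -((-1) ^ (s \ J).card
      * ω ^ ((s \ J).card * ((s \ J).card - 1) / 2) * ω ^ (s \ J).card
      * (∏ j ∈ J.erase i, (z i - z j * ω) / (z i - z j))
      * ∏ j ∈ J.erase i, ∏ k ∈ s \ J, (z k - z j * ω) / (z k - z j)) := by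
  rw [coeff, card_sdiff_erase hJ hi, Nat.triangle_succ, sdiff_erase (hJ hi),
    prod_congr rfl fun j _ => prod_insert fun h => (mem_sdiff.1 h).2 hi, prod_mul_distrib]
  ring

theorem coeff_mul_nodalWeight_add_erase (hω : ω ≠ 0)
    (hcross : ∀ i ∈ s, ∀ j ∈ s, i ≠ j → z i ≠ z j * ω) {J : Finset ι} {i : ι}
    (hJ : J ⊆ s) (hi : i ∈ J) :
    coeff s z ω J * nodalWeight s (pole s z ω J) i
      + coeff s z ω (J.erase i) * nodalWeight s (pole s z ω (J.erase i)) i = 0 := by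
  have his : i ∈ s := hJ hi
  set d := (s \ J).card
  have hJfactor : (∏ j ∈ J.erase i, (z i - z j * ω) / (z i - z j))
      * ∏ j ∈ J.erase i, (z i * ω ^ (d + 1) - z j * ω ^ (d + 1 + 1))⁻¹
      = ∏ j ∈ J.erase i, (z i * ω ^ (d + 1) - z j * ω ^ (d + 1))⁻¹ := by
    rw [← prod_mul_distrib]
    refine prod_congr rfl fun j hj => ?_
    obtain ⟨hji, hjJ⟩ := mem_erase.1 hj
    exact div_mul_inv_sub_mul_pow_succ hω (hcross i his j (hJ hjJ) (Ne.symm hji)) _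
  have hKfactor : (∏ k ∈ s \ J, (z k - z i * ω) / (z k - z i))
      * ∏ k ∈ s \ J, (z i * ω ^ (d + 1) - z k * ω ^ d)⁻¹
      = ω ^ d * ∏ k ∈ s \ J, (z i * ω ^ (d + 1) - z k * ω ^ (d + 1))⁻¹ := by
    have hpt : ∀ k ∈ s \ J, (z k - z i * ω) / (z k - z i) * (z i * ω ^ (d + 1) - z k * ω ^ d)⁻¹
        = ω * (z i * ω ^ (d + 1) - z k * ω ^ (d + 1))⁻¹ := fun k hk => by
      obtain ⟨hks, hkJ⟩ := mem_sdiff.1 hk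
      exact div_mul_inv_mul_pow_succ_sub hω (hcross k hks i his fun h => hkJ (h ▸ hi)) d
    rw [← prod_mul_distrib, prod_congr rfl hpt, prod_mul_distrib, prod_const]
  rw [nodalWeight_pole_of_mem hJ hi, nodalWeight_pole_erase hJ hi, coeff_of_mem hi,
    coeff_erase hJ hi]
  linear_combination ((-1) ^ d * ω ^ (d * (d - 1) / 2)
      * (∏ j ∈ J.erase i, ∏ k ∈ s \ J, (z k - z j * ω) / (z k - z j))
      * ∏ j ∈ J.erase i, (z i * ω ^ (d + 1) - z j * ω ^ (d + 1))⁻¹) * hKfactor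
    - ((-1) ^ d * ω ^ (d * (d - 1) / 2) * ω ^ d
      * (∏ j ∈ J.erase i, ∏ k ∈ s \ J, (z k - z j * ω) / (z k - z j))
      * ∏ k ∈ s \ J, (z i * ω ^ (d + 1) - z k * ω ^ (d + 1))⁻¹) * hJfactor

theorem sum_coeff_mul_prod_inv_sub_pole (hs : s.Nonempty) (hω : ω ≠ 0) (hz : Set.InjOn z s)
    (hcross : ∀ i ∈ s, ∀ j ∈ s, i ≠ j → z i ≠ z j * ω) {x : F}
    (hx : ∀ J ∈ s.powerset, ∀ i ∈ s, x ≠ pole s z ω J i) :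
    ∑ J ∈ s.powerset, coeff s z ω J * ∏ i ∈ s, (x - pole s z ω J i)⁻¹ = 0 := by
  calc _ = ∑ J ∈ s.powerset, ∑ i ∈ s,
        coeff s z ω J * nodalWeight s (pole s z ω J) i * (x - pole s z ω J i)⁻¹ := by
        refine sum_congr rfl fun J hJ => ?_
        rw [prod_inv_sub_eq_sum_nodalWeight_mul (pole_injOn hω hz hcross) hs (hx J hJ), mul_sum]
        simp_rw [mul_assoc]
    _ = ∑ J ∈ s.powerset, ∑ i ∈ J, (coeff s z ω J * nodalWeight s (pole s z ω J) i
          + coeff s z ω (J.erase i) * nodalWeight s (pole s z ω (J.erase i)) i)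
          * (x - pole s z ω J i)⁻¹ := by
        rw [sum_powerset_sum_eq_sum_sum_add_erase]
        refine sum_congr rfl fun J hJ => sum_congr rfl fun i hi => ?_
        rw [pole_erase_self (mem_powerset.1 hJ) hi, add_mul]
    _ = 0 := sum_eq_zero fun J hJ => sum_eq_zero fun i hi => by
        rw [coeff_mul_nodalWeight_add_erase hω hcross (mem_powerset.1 hJ) hi, zero_mul]

theorem inv_ne_pole (hω : ω ≠ 0) {t : F} (ht : t ≠ 0) (τ : ℤ)
    (hden : ∀ i (m : ℤ), t * z i * ω ^ m ≠ 1) (J : Finset ι) (i : ι) :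
    (t * ω ^ τ)⁻¹ ≠ pole s z ω J i := by
  intro h
  apply hden i (τ + (((s \ J).card + if i ∈ J then 1 else 0 : ℕ) : ℤ))
  rw [mul_zpow_add_natCast hω, ← pole, ← h, mul_inv_cancel₀ (mul_ne_zero ht (zpow_ne_zero τ hω))]

theorem summand_eq (hω : ω ≠ 0) {t : F} (ht : t ≠ 0) (τ : ℤ) {J : Finset ι} (hJ : J ⊆ s) :
    (-1 : F) ^ (s \ J).card * ω ^ ((s \ J).card * ((s \ J).card - 1) / 2)
        * (∏ j ∈ J, 1 / (t * z j * ω ^ (τ + ((s \ J).card : ℤ) + 1) - 1))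
        * (∏ k ∈ s \ J, 1 / (t * z k * ω ^ (τ + ((s \ J).card : ℤ)) - 1))
        * ∏ j ∈ J, ∏ k ∈ s \ J, (z k - z j * ω) / (z k - z j)
      = (-(t * ω ^ τ)⁻¹) ^ s.card
        * (coeff s z ω J * ∏ i ∈ s, ((t * ω ^ τ)⁻¹ - pole s z ω J i)⁻¹) := by
  have hu : t * ω ^ τ ≠ 0 := mul_ne_zero ht (zpow_ne_zero τ hω)
  have hJprod : ∏ j ∈ J, 1 / (t * z j * ω ^ (τ + ((s \ J).card : ℤ) + 1) - 1)
      = (-(t * ω ^ τ)⁻¹) ^ J.card * ∏ j ∈ J, ((t * ω ^ τ)⁻¹ - pole s z ω J j)⁻¹ := by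
    rw [← prod_const, ← prod_mul_distrib]
    refine prod_congr rfl fun j hj => ?_
    rw [pole_of_mem hj, ← one_div_mul_sub_one hu, ← mul_zpow_add_natCast hω, Nat.cast_succ,
      add_assoc]
  have hKprod : ∏ k ∈ s \ J, 1 / (t * z k * ω ^ (τ + ((s \ J).card : ℤ)) - 1)
      = (-(t * ω ^ τ)⁻¹) ^ (s \ J).card
        * ∏ k ∈ s \ J, ((t * ω ^ τ)⁻¹ - pole s z ω J k)⁻¹ := by
    rw [← prod_const, ← prod_mul_distrib]
    refine prod_congr rfl fun k hk => ?_
    rw [pole_of_notMem (mem_sdiff.1 hk).2, ← one_div_mul_sub_one hu, ← mul_zpow_add_natCast hω]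
  rw [hJprod, hKprod, ← prod_sdiff hJ, ← card_sdiff_add_card_eq_card hJ, pow_add, coeff]
  ring

end

section

variable {𝕜 ι : Type*} [NontriviallyNormedField 𝕜] [DecidableEq ι] {s : Finset ι} {z : ι → 𝕜}
  {ω : 𝕜}

theorem continuous_coeff_add_const (J : Finset ι) :
    Continuous fun ε : 𝕜 => coeff s (fun i => z i + ε) ω J := by
  simp only [coeff, add_sub_add_right_eq_sub]
  fun_prop

theorem continuous_pole_add_const (J : Finset ι) (i : ι) :
    Continuous fun ε : 𝕜 => pole s (fun i => z i + ε) ω J i := by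
  simp only [pole]
  fun_prop

theorem continuousAt_sum_coeff_mul_prod_inv_sub_pole {x : 𝕜}
    (hx : ∀ J ∈ s.powerset, ∀ i ∈ s, x ≠ pole s z ω J i) :
    ContinuousAt (fun ε : 𝕜 => ∑ J ∈ s.powerset, coeff s (fun i => z i + ε) ω J
      * ∏ i ∈ s, (x - pole s (fun i => z i + ε) ω J i)⁻¹) 0 :=
  tendsto_finsetSum _ fun J hJ => (continuous_coeff_add_const J).continuousAt.mul <|
    tendsto_finsetProd _ fun i hi =>
      (continuous_const.sub (continuous_pole_add_const J i)).continuousAt.inv₀ <| by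
        simpa using sub_ne_zero.2 (hx J hJ i hi)

theorem sum_coeff_mul_prod_inv_sub_pole_of_ne_one (hs : s.Nonempty) (hω0 : ω ≠ 0)
    (hω1 : ω ≠ 1) (hz : Set.InjOn z s) {x : 𝕜}
    (hx : ∀ J ∈ s.powerset, ∀ i ∈ s, x ≠ pole s z ω J i) :
    ∑ J ∈ s.powerset, coeff s z ω J * ∏ i ∈ s, (x - pole s z ω J i)⁻¹ = 0 := by
  set G : 𝕜 → 𝕜 := fun ε => ∑ J ∈ s.powerset, coeff s (fun i => z i + ε) ω J
      * ∏ i ∈ s, (x - pole s (fun i => z i + ε) ω J i)⁻¹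
  have hG : ContinuousAt G 0 := continuousAt_sum_coeff_mul_prod_inv_sub_pole hx
  have hcross : ∀ᶠ ε in 𝓝[≠] (0 : 𝕜), ∀ i ∈ s, ∀ j ∈ s, i ≠ j → z i + ε ≠ (z j + ε) * ω := by
    simp only [eventually_all_finset]
    exact fun i _ j _ => (eventually_add_ne_add_mul hω1 (z i) (z j)).mono fun _ h _ => h
  have hpole : ∀ᶠ ε in 𝓝[≠] (0 : 𝕜), ∀ J ∈ s.powerset, ∀ i ∈ s,
      x ≠ pole s (fun i => z i + ε) ω J i := by
    refine eventually_nhdsWithin_of_eventually_nhds ?_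
    simp only [eventually_all_finset]
    intro J hJ i hi
    refine ((continuous_pole_add_const J i).continuousAt.eventually_ne ?_).mono
      fun _ h => Ne.symm h
    simpa using (hx J hJ i hi).symm
  have hzero : G =ᶠ[𝓝[≠] 0] fun _ => 0 := by
    filter_upwards [hcross, hpole] with ε hε hε'
    exact sum_coeff_mul_prod_inv_sub_pole hs hω0
      (fun i hi j hj h => hz hi hj (add_right_cancel h)) hε hε'
  simpa [G] using ((hG.eventuallyEq_nhds_iff_eventuallyEq_nhdsNE continuousAt_const).1
    hzero).eq_of_nhds

end

end KeyIdentity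

theorem stmt_2_general (ω : ℂ) (hω1 : ω ≠ 1) (hω0 : ω ≠ 0) (t : ℂ) (ht : t ≠ 0) (τ : ℤ)
    (n : ℕ) (z : Fin n → ℂ)
    (hzinj : Function.Injective z)
    (hden : ∀ (i : Fin n) (m : ℤ), t * z i * ω ^ m ≠ 1)
    (I : Finset (Fin n)) (hI : I.card < n) :
    ∑ J ∈ (univ \ I).powerset,
      ((-1 : ℂ) ^ ((univ \ I) \ J).card
        * ω ^ (((univ \ I) \ J).card * (((univ \ I) \ J).card - 1) / 2)
        * (∏ j ∈ J, 1 / (t * z j * ω ^ (τ + (((univ \ I) \ J).card : ℤ) + 1) - 1))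
        * (∏ k ∈ (univ \ I) \ J, 1 / (t * z k * ω ^ (τ + (((univ \ I) \ J).card : ℤ)) - 1))
        * ∏ j ∈ J, ∏ k ∈ (univ \ I) \ J, (z k - z j * ω) / (z k - z j)) = 0 := by
  have hs : (univ \ I).Nonempty := by
    rw [← card_pos, card_sdiff_of_subset (subset_univ I), card_univ, Fintype.card_fin]
    omega
  rw [sum_congr rfl fun J hJ => KeyIdentity.summand_eq hω0 ht τ (mem_powerset.1 hJ), ← mul_sum,
    KeyIdentity.sum_coeff_mul_prod_inv_sub_pole_of_ne_one hs hω0 hω1 hzinj.injOn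
      fun J _ i _ => KeyIdentity.inv_ne_pole hω0 ht τ hden J i, mul_zero]

/-- key identity 2 (Lemma B.4), stated as a sum over the unordered
partitions `J ⊔ K` of the complement of `I`; the order-dependent factor
`∏_{q=1}^{n_D} ω^{q-1}` equals `ω^(n_D (n_D - 1)/2)` and the remaining factors are
symmetric in the `j`'s and in the `k`'s. -/
theorem stmt_2 (ω : ℂ) (hω1 : ω ≠ 1) (hω0 : ω ≠ 0) (t : ℂ) (ht : t ≠ 0) (τ : ℤ)
    (n : ℕ) (hn : 1 ≤ n) (z : Fin n → ℂ)
    (hz0 : ∀ i, z i ≠ 0) (hzinj : Function.Injective z)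
    (hden : ∀ (i : Fin n) (m : ℤ), t * z i * ω ^ m ≠ 1)
    (I : Finset (Fin n)) (hI : I.card < n) :
    ∑ J ∈ (univ \ I).powerset,
      ((-1 : ℂ) ^ ((univ \ I) \ J).card
        * ω ^ (((univ \ I) \ J).card * (((univ \ I) \ J).card - 1) / 2)
        * (∏ j ∈ J, 1 / (t * z j * ω ^ (τ + (((univ \ I) \ J).card : ℤ) + 1) - 1))
        * (∏ k ∈ (univ \ I) \ J, 1 / (t * z k * ω ^ (τ + (((univ \ I) \ J).card : ℤ)) - 1))
        * ∏ j ∈ J, ∏ k ∈ (univ \ I) \ J, (z k - z j * ω) / (z k - z j)) = 0 :=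
  stmt_2_general ω hω1 hω0 t ht τ n z hzinj hden I hI
end

section
/- Gauge transformation identity: let q² = ω be a primitive N-th root of unity, and define the XXZ-type L-operator L̃(z) = [[q^{-1/2}(−z q^{-1/2} Z^{-1/2} + z^{-1} q^{1/2} Z^{1/2}), x^{-1/2} y^{1/2}(Z^{1/2} − Z^{-1/2})X], [x^{1/2} y^{-1/2} X^{-1}(Z^{-1/2} − Z^{1/2}), q^{1/2}(−z q^{1/2} Z^{1/2} + z^{-1} q^{-1/2} Z^{-1/2})]], where Z^{1/2} v_σ = q^σ v_σ. Then diag(1, z^{-1}q^{1/2}) · t^{1/2} z q^{1/2} Z^{1/2} · L̃(t^{1/2} z q^{1/2}) · diag(1, z q^{-1/2}) = L(z²), where L(z²) = [[−t z² + Z, −y z² (1−Z)X],[x X^{-1}(1−Z), 1 − t z² ω Z]] and t = xy. -/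
namespace Gauge

variable (N : ℕ)

/-- `Z^{1/2} v_σ = q^σ v_σ`. -/
noncomputable def Zh (q : ℂ) : Matrix (Fin N) (Fin N) ℂ :=
  Matrix.diagonal fun σ => q ^ (σ : ℕ)

/-- `Z^{-1/2} v_σ = q^{-σ} v_σ`. -/
noncomputable def Zhinv (q : ℂ) : Matrix (Fin N) (Fin N) ℂ :=
  Matrix.diagonal fun σ => (q⁻¹) ^ (σ : ℕ)

/-- `Z v_σ = ω^σ v_σ` with `ω = q²`. -/
noncomputable def Zfull (q : ℂ) : Matrix (Fin N) (Fin N) ℂ :=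
  Matrix.diagonal fun σ => (q ^ 2) ^ (σ : ℕ)

/-- `X v_σ = v_{σ+1 mod N}`. -/
def Xm : Matrix (Fin N) (Fin N) ℂ :=
  Matrix.of fun σ' σ : Fin N => if (σ' : ℕ) = ((σ : ℕ) + 1) % N then 1 else 0

/-- `X⁻¹ v_σ = v_{σ-1 mod N}`. -/
def Xminv : Matrix (Fin N) (Fin N) ℂ :=
  Matrix.of fun σ' σ : Fin N => if ((σ' : ℕ) + 1) % N = (σ : ℕ) then 1 else 0

/-- The XXZ-type L-operator `L̃(u)` (with `q^{1/2} = sq`, `x^{1/2} = sx`,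
`y^{1/2} = sy`). -/
noncomputable def Ltil (q sx sy : ℂ) (u : ℂ) :
    Matrix (Fin 2) (Fin 2) (Matrix (Fin N) (Fin N) ℂ) :=
  !![(-(u * q⁻¹)) • Zhinv N q + u⁻¹ • Zh N q,
     (sx⁻¹ * sy) • ((Zh N q - Zhinv N q) * Xm N);
     (sx * sy⁻¹) • (Xminv N * (Zhinv N q - Zh N q)),
     (-(u * q)) • Zh N q + u⁻¹ • Zhinv N q]

/-- The superintegrable L-operator `L(w)` with `t = xy`, `ω = q²`. -/
noncomputable def Lsc (q x y : ℂ) (w : ℂ) :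
    Matrix (Fin 2) (Fin 2) (Matrix (Fin N) (Fin N) ℂ) :=
  !![(-(x * y * w)) • (1 : Matrix (Fin N) (Fin N) ℂ) + Zfull N q,
     (-(y * w)) • ((1 - Zfull N q) * Xm N);
     x • (Xminv N * (1 - Zfull N q)),
     1 - (x * y * w * q ^ 2) • Zfull N q]

end Gauge

open Gauge

lemma ZhZhinv (N : ℕ) (q : ℂ) (hq0 : q ≠ 0) : Zh N q * Zhinv N q = 1 := by
  simp only [Zh, Zhinv, Matrix.diagonal_mul_diagonal, ← mul_pow, mul_inv_cancel₀ hq0,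
    one_pow, Matrix.diagonal_one]

lemma ZhZh (N : ℕ) (q : ℂ) : Zh N q * Zh N q = Zfull N q := by
  simp only [Zh, Zfull, Matrix.diagonal_mul_diagonal, ← pow_add, ← two_mul, pow_mul]

lemma key10 (N : ℕ) (q : ℂ) (hq0 : q ≠ 0) :
    q • (Zh N q * (Xminv N * (Zhinv N q - Zh N q))) = Xminv N * (1 - Zfull N q) := by
  ext σ' σ
  have h1 : (1 : Matrix (Fin N) (Fin N) ℂ) = Matrix.diagonal fun _ => 1 := by
    simp [Matrix.diagonal_one]
  rw [h1]
  simp only [Zh, Zhinv, Zfull, Matrix.diagonal_sub, Matrix.smul_apply,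
    Matrix.diagonal_mul, Matrix.mul_diagonal, Pi.sub_apply, Xminv, Matrix.of_apply, smul_eq_mul]
  split_ifs with h
  · rcases Nat.lt_or_ge ((σ' : ℕ) + 1) N with hlt | hge
    · have hσ : (σ : ℕ) = (σ' : ℕ) + 1 := by rw [← h, Nat.mod_eq_of_lt hlt]
      rw [hσ, inv_pow]
      field_simp
      ring
    · have hs : (σ' : ℕ) + 1 = N := by
        have := σ'.isLt; omega
      have hσ : (σ : ℕ) = 0 := by rw [← h, hs, Nat.mod_self]
      rw [hσ]
      simp
  · ring


/-- the gauge transformation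
`diag(1, z⁻¹ q^{1/2}) · (t^{1/2} z q^{1/2} Z^{1/2}) L̃(t^{1/2} z q^{1/2}) · diag(1, z q^{-1/2}) = L(z²)`,
where each entry of `L̃` is multiplied on the left by the operator
`t^{1/2} z q^{1/2} Z^{1/2}`. -/
theorem stmt_16 (N : ℕ) (hN : 2 ≤ N) (q sq : ℂ) (hq0 : q ≠ 0) (hsq : sq ^ 2 = q)
    (hq : IsPrimitiveRoot (q ^ 2) N)
    (x y sx sy : ℂ) (hx : x ≠ 0) (hy : y ≠ 0) (hsx : sx ^ 2 = x) (hsy : sy ^ 2 = y)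
    (z : ℂ) (hz : z ≠ 0) :
    !![(1 : Matrix (Fin N) (Fin N) ℂ), 0; 0, (z⁻¹ * sq) • (1 : Matrix (Fin N) (Fin N) ℂ)]
        * (Matrix.of fun i j =>
            ((sx * sy * z * sq) • Zh N q) * (Ltil N q sx sy (sx * sy * z * sq) i j))
        * !![(1 : Matrix (Fin N) (Fin N) ℂ), 0; 0, (z * sq⁻¹) • (1 : Matrix (Fin N) (Fin N) ℂ)]
      = Lsc N q x y (z ^ 2) := by
  subst hsx hsy hsq
  have hsq0 : sq ≠ 0 := by intro h; exact hq0 (by simp [h])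
  have hsx0 : sx ≠ 0 := by intro h; exact hx (by simp [h])
  have hsy0 : sy ≠ 0 := by intro h; exact hy (by simp [h])
  have hu : sx * sy * z * sq ≠ 0 :=
    mul_ne_zero (mul_ne_zero (mul_ne_zero hsx0 hsy0) hz) hsq0
  refine Matrix.ext fun i j => ?_
  fin_cases i <;> fin_cases j <;>
    simp only [Matrix.mul_apply, Fin.sum_univ_two, Ltil, Lsc, Matrix.of_apply,
      Matrix.cons_val', Matrix.cons_val_zero, Matrix.cons_val_one, Matrix.head_cons,
      Matrix.empty_val', Matrix.cons_val_fin_one, Matrix.head_fin_const, Fin.mk_zero,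
      Fin.mk_one, Matrix.zero_mul, Matrix.mul_zero, zero_add, add_zero, Matrix.one_mul,
      Matrix.mul_one, Fin.isValue]
  · -- (0,0)
    simp only [mul_add, smul_mul_assoc, mul_smul_comm, smul_smul, ZhZh, ZhZhinv N _ hq0]
    match_scalars <;> field_simp <;> ring
  · -- (0,1)
    simp only [smul_mul_assoc, mul_smul_comm, smul_smul, Matrix.mul_one, ← mul_assoc,
      mul_sub, sub_mul, one_mul, ZhZh, ZhZhinv N _ hq0]
    match_scalars <;> field_simp <;> ring
  · -- (1,0)
    rw [← key10 N (sq ^ 2) hq0]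
    simp only [smul_mul_assoc, mul_smul_comm, smul_smul, Matrix.one_mul]
    match_scalars
    field_simp
  · -- (1,1)
    simp only [mul_add, add_mul, smul_mul_assoc, mul_smul_comm, smul_smul,
      Matrix.one_mul, Matrix.mul_one, ZhZh, ZhZhinv N _ hq0]
    match_scalars <;> field_simp <;> ring
end
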